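/- Define f : ℕ → ℕ by f(1) = 1 and f(n) = C(n, ⌊n/2⌋)·(f(⌊n/2⌋) + f(⌈n/2⌉)) for n > 1. If n ≥ 1 is a power of two, then f(n) ≤ (1/4) · 4^n · n^{−(lg n)/4} · n^{5/4 − (lg π)/2}, where lg = log₂. -/

import Mathlib

def f : ℕ → ℕ
  | 0 => 1
  | 1 => 1
  | n + 2 => Nat.choose (n + 2) ((n + 2) / 2) * (f ((n + 2) / 2) + f ((n + 2 + 1) / 2))
decreasing_by all_goals omega

open Real

lemma sqrt_pi_le_stirling (n : ℕ) : Real.sqrt π ≤ Stirling.stirlingSeq (n+1) := by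
  have h : Filter.Tendsto (fun k => Stirling.stirlingSeq (k+1)) Filter.atTop (nhds (Real.sqrt π)) :=
    (Filter.tendsto_add_atTop_iff_nat 1).2 Stirling.tendsto_stirlingSeq_sqrt_pi
  exact Stirling.stirlingSeq'_antitone.le_of_tendsto h n

lemma fact_eq (n : ℕ) (hn : 1 ≤ n) :
    ((Nat.factorial n : ℕ) : ℝ) = Stirling.stirlingSeq n * (Real.sqrt (2*n) * ((n : ℝ)/Real.exp 1)^(n:ℕ)) := by
  have hpos : (0:ℝ) < Real.sqrt (2*n) * ((n:ℝ)/Real.exp 1)^n := by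
    have : (0:ℝ) < (n:ℝ) := by exact_mod_cast hn
    positivity
  rw [Stirling.stirlingSeq]
  field_simp
lemma central_le (s : ℕ) (hs : 1 ≤ s) :
    ((Nat.choose (2*s) s : ℕ) : ℝ) ≤ 4^s / Real.sqrt (π * s) := by
  have hspos : (0:ℝ) < (s:ℝ) := by exact_mod_cast hs
  set A := Stirling.stirlingSeq (2*s) with hA
  set B := Stirling.stirlingSeq s with hB
  have hApos : 0 < A := by rw [hA, show 2*s = (2*s-1)+1 by omega]; exact Stirling.stirlingSeq'_pos _
  have hBpos : 0 < B := by rw [hB, show s = (s-1)+1 by omega]; exact Stirling.stirlingSeq'_pos _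
  have hABle : A ≤ B := by
    rw [hA, hB, show 2*s = (2*s-1)+1 by omega]
    conv_rhs => rw [show s = (s-1)+1 by omega]
    exact Stirling.stirlingSeq'_antitone (show s-1 ≤ 2*s-1 by omega)
  have hpiB : Real.sqrt π ≤ B := by
    rw [hB, show s = (s-1)+1 by omega]; exact sqrt_pi_le_stirling _
  set e := Real.exp 1 with he
  have hepos : 0 < e := Real.exp_pos 1
  set rs := Real.sqrt s with hrs
  set rπ := Real.sqrt π with hrπ
  have hrs2 : rs^2 = (s:ℝ) := Real.sq_sqrt hspos.le
  have hrspos : 0 < rs := Real.sqrt_pos.2 hspos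
  have hrπpos : 0 < rπ := Real.sqrt_pos.2 pi_pos
  set P := ((s:ℝ)/e)^(s:ℕ) with hP
  have hPpos : 0 < P := by positivity
  set c := ((Nat.choose (2*s) s : ℕ) : ℝ) with hc
  have hcpos : 0 < c := by
    rw [hc]; exact_mod_cast Nat.choose_pos (show s ≤ 2*s by omega)
  have hfe : c * (((Nat.factorial s : ℕ):ℝ) * ((Nat.factorial s : ℕ):ℝ)) = ((Nat.factorial (2*s) : ℕ):ℝ) := by
    have h0 := Nat.choose_mul_factorial_mul_factorial (show s ≤ 2*s by omega)
    rw [show 2*s - s = s by omega] at h0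
    have h1 := congrArg (Nat.cast : ℕ → ℝ) h0
    push_cast at h1
    rw [hc]; linear_combination h1
  have e1 : ((Nat.factorial s : ℕ):ℝ) * ((Nat.factorial s : ℕ):ℝ) = B^2 * (2*(s:ℝ)) * P^2 := by
    rw [fact_eq s hs]
    have h2s : Real.sqrt (2*(s:ℝ)) ^ 2 = 2*(s:ℝ) := Real.sq_sqrt (by positivity)
    rw [← hB, ← hP]
    linear_combination B^2 * P^2 * h2s
  have e2 : ((Nat.factorial (2*s) : ℕ):ℝ) = A * (2*rs) * ((4:ℝ)^(s:ℕ) * P^2) := by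
    rw [fact_eq (2*s) (by omega)]
    have hcast : ((2*s:ℕ):ℝ) = 2*(s:ℝ) := by push_cast; ring
    have hsq : Real.sqrt (2*((2*s:ℕ):ℝ)) = 2 * rs := by
      rw [hcast, show (2:ℝ)*(2*(s:ℝ)) = 2^2 * (s:ℝ) by ring,
        Real.sqrt_mul (by positivity), Real.sqrt_sq (by norm_num), hrs]
    have hpow : (((2*s:ℕ):ℝ)/e)^(2*s:ℕ) = (4:ℝ)^(s:ℕ) * P^2 := by
      rw [hcast, show (2*(s:ℝ))/e = 2 * ((s:ℝ)/e) by ring, mul_pow, hP]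
      rw [show (2:ℝ)^(2*s) = 4^s by rw [pow_mul]; norm_num, ← pow_mul, mul_comm s 2]
    rw [hsq, hpow, ← hA]; ring
  have e3 : c * (B^2 * (2*(s:ℝ)) * P^2) = A * (2*rs) * ((4:ℝ)^(s:ℕ) * P^2) := by
    rw [← e1, ← e2, hfe]
  have hkey : c * (B^2 * rs) = A * (4:ℝ)^(s:ℕ) := by
    have h2 : c * (B^2 * rs) * (2 * rs * P^2) = A * (4:ℝ)^(s:ℕ) * (2 * rs * P^2) := by
      linear_combination e3 + c * B^2 * 2 * P^2 * hrs2
    exact mul_right_cancel₀ (by positivity) h2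
  have hsplit : Real.sqrt (π * s) = rπ * rs := by rw [Real.sqrt_mul pi_pos.le, ← hrπ, ← hrs]
  rw [hsplit, le_div_iff₀ (by positivity)]
  have hABπ : A * rπ ≤ B^2 := by nlinarith
  have h4 : A * rπ * (4:ℝ)^(s:ℕ) ≤ B^2 * (4:ℝ)^(s:ℕ) :=
    mul_le_mul_of_nonneg_right hABπ (by positivity)
  have h5 : c * (rπ * rs) * B^2 = A * rπ * (4:ℝ)^(s:ℕ) := by linear_combination rπ * hkey
  have h6 : c * (rπ * rs) * B^2 ≤ (4:ℝ)^(s:ℕ) * B^2 := by rw [h5]; linarith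
  exact le_of_mul_le_mul_right h6 (by positivity)

lemma f_two_mul (k : ℕ) (hk : 1 ≤ k) : f (2*k) = Nat.choose (2*k) k * (2 * f k) := by
  obtain ⟨j, rfl⟩ : ∃ j, k = j + 1 := ⟨k - 1, by omega⟩
  rw [show 2*(j+1) = 2*j+2 by ring, f]
  rw [show (2*j+2)/2 = j+1 by omega, show (2*j+2+1)/2 = j+1 by omega]
  rw [show 2*j+2 = 2*(j+1) by ring]
  ring

noncomputable def g (m : ℕ) : ℝ :=
  (4:ℝ)^(2^m : ℕ) * (2:ℝ)^((5*(m:ℝ) - (m:ℝ)^2)/4 - 2) * Real.pi^(-(m:ℝ)/2)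

lemma g_succ (m : ℕ) :
    g (m+1) = (4:ℝ)^(2^m:ℕ) / Real.sqrt (π * ((2^m:ℕ):ℝ)) * (2 * g m) := by
  have hsqrt : Real.sqrt (π * ((2^m:ℕ):ℝ)) = π^((1:ℝ)/2) * (2:ℝ)^((m:ℝ)/2) := by
    rw [Real.sqrt_eq_rpow, Real.mul_rpow pi_pos.le (by positivity)]
    congr 1
    rw [show ((2^m:ℕ):ℝ) = (2:ℝ)^(m:ℕ) by push_cast; ring,
      ← Real.rpow_natCast 2 m, ← Real.rpow_mul (by norm_num)]
    congr 1; ring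
  have h4 : (4:ℝ)^(2^(m+1):ℕ) = (4:ℝ)^(2^m:ℕ) * (4:ℝ)^(2^m:ℕ) := by
    rw [← pow_add]; congr 1; ring
  have h2 : (2:ℝ)^((5*((m:ℕ)+1:ℝ) - ((m:ℕ)+1:ℝ)^2)/4 - 2)
      = (2:ℝ)^((5*(m:ℝ) - (m:ℝ)^2)/4 - 2) * (2 * ((2:ℝ)^((m:ℝ)/2))⁻¹) := by
    rw [show (2 * ((2:ℝ)^((m:ℝ)/2))⁻¹) = (2:ℝ)^(1:ℝ) * (2:ℝ)^(-((m:ℝ)/2)) by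
      rw [Real.rpow_one, Real.rpow_neg (by norm_num)]]
    rw [← Real.rpow_add two_pos, ← Real.rpow_add two_pos]
    congr 1; ring
  have hπ : π^(-(((m:ℕ)+1:ℝ))/2) = π^(-(m:ℝ)/2) * (π^((1:ℝ)/2))⁻¹ := by
    rw [show (π^((1:ℝ)/2))⁻¹ = π^(-((1:ℝ)/2)) by rw [Real.rpow_neg pi_pos.le],
      ← Real.rpow_add pi_pos]
    congr 1; ring
  have hπpos : (0:ℝ) < π^((1:ℝ)/2) := Real.rpow_pos_of_pos pi_pos _
  have h2pos : (0:ℝ) < (2:ℝ)^((m:ℝ)/2) := Real.rpow_pos_of_pos two_pos _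
  rw [g, g, hsqrt]
  push_cast
  rw [h4, h2, hπ]
  field_simp

lemma f_bound (m : ℕ) : (f (2^m) : ℝ) ≤ g m := by
  induction m with
  | zero =>
    have hf1 : f 1 = 1 := by rw [f]
    rw [pow_zero, hf1, g]
    rw [show (5*((0:ℕ):ℝ) - ((0:ℕ):ℝ)^2)/4 - 2 = ((-2:ℤ):ℝ) by push_cast; ring,
      Real.rpow_intCast, show (-(((0:ℕ):ℝ))/2) = (0:ℝ) by push_cast; ring, Real.rpow_zero]
    norm_num
  | succ m ih =>
    have h1 : 1 ≤ 2^m := Nat.one_le_two_pow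
    have hfr : (f (2^(m+1)) : ℝ) = ((Nat.choose (2*2^m) (2^m) : ℕ):ℝ) * (2 * (f (2^m):ℝ)) := by
      rw [show 2^(m+1) = 2*2^m by ring, f_two_mul _ h1]
      push_cast; ring
    rw [hfr, g_succ]
    have hfpos : (0:ℝ) ≤ (f (2^m) : ℝ) := by positivity
    apply mul_le_mul (central_le _ h1) (by linarith) (by linarith) (by positivity)

theorem stmt_11 (n : ℕ) (hn : 1 ≤ n) (hpow : ∃ m : ℕ, n = 2 ^ m) :
    (f n : ℝ) ≤ (1/4) * 4 ^ (n : ℝ) * (n : ℝ) ^ (-(Real.logb 2 n) / 4) *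
        (n : ℝ) ^ ((5 : ℝ)/4 - (Real.logb 2 Real.pi) / 2) := by
  obtain ⟨m, rfl⟩ := hpow
  have hn2 : ((2^m : ℕ):ℝ) = (2:ℝ)^((m:ℕ):ℝ) := by
    rw [Real.rpow_natCast]; push_cast; ring
  have hlg : Real.logb 2 ((2^m:ℕ):ℝ) = (m:ℝ) := by
    rw [hn2, Real.logb_rpow two_pos (by norm_num)]
  rw [hlg]
  set L := Real.logb 2 π with hL
  have h4n : (4:ℝ)^(((2^m:ℕ)):ℝ) = (4:ℝ)^(2^m:ℕ) := Real.rpow_natCast 4 (2^m)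
  have hnx : ∀ x : ℝ, ((2^m:ℕ):ℝ) ^ x = (2:ℝ) ^ ((m:ℝ) * x) := fun x => by
    rw [hn2, ← Real.rpow_mul (by norm_num)]
  have hπ : (2:ℝ) ^ ((m:ℝ) * ((5:ℝ)/4 - L/2)) = (2:ℝ)^((m:ℝ)*((5:ℝ)/4)) * π ^ (-(m:ℝ)/2) := by
    have hπ2 : π ^ (-(m:ℝ)/2) = (2:ℝ) ^ (L * (-(m:ℝ)/2)) := by
      rw [Real.rpow_mul (by norm_num), Real.rpow_logb two_pos (by norm_num) pi_pos]
    rw [hπ2, ← Real.rpow_add two_pos]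
    congr 1; ring
  have hq : (1/4:ℝ) = (2:ℝ)^(-2:ℝ) := by
    rw [show (-2:ℝ) = ((-2:ℤ):ℝ) by norm_num, Real.rpow_intCast]; norm_num
  have hcomb : (2:ℝ)^(-2:ℝ) * (2:ℝ)^((m:ℝ) * (-(m:ℝ)/4)) * (2:ℝ)^((m:ℝ)*((5:ℝ)/4))
      = (2:ℝ)^((5*(m:ℝ) - (m:ℝ)^2)/4 - 2) := by
    rw [← Real.rpow_add two_pos, ← Real.rpow_add two_pos]; congr 1; ring
  calc (f (2^m) : ℝ) ≤ g m := f_bound m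
    _ = 1/4 * 4 ^ (((2^m:ℕ)):ℝ) * ((2^m:ℕ):ℝ) ^ (-(m:ℝ)/4) * ((2^m:ℕ):ℝ) ^ ((5:ℝ)/4 - L/2) := by
        rw [h4n, hnx, hnx, hπ, hq, g]
        linear_combination (-((4:ℝ)^(2^m:ℕ) * π^(-(m:ℝ)/2))) * hcomb
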